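/- Uplink-to-downlink inclusion with explicit dual powers under power ordering: let π be a network decoding order and r̄ a nonpositive power allocation satisfying α_{kk}^{[π_k(2)]} + r̄_k^{[π_k(2)]} ≥ α_{kk}^{[π_k(1)]} + r̄_k^{[π_k(1)]} for every cell k. Define the downlink power allocation r by r_k^{[π_k(l)]} = −γ_k^{[π_k(l)]} for all k and l ∈ {1,2}. Then r is nonpositive and P^IMAC_π(r̄) ⊆ P^IBC_π(r). -/
import Mathlib


open Finset

/-- Positive part: `(x)⁺ = max {x, 0}`. -/
noncomputable def pplus (x : ℝ) : ℝ := max x 0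

/-- Maximum over all pairs `(l, j)` with `j ≠ k` of `f j l`. -/
noncomputable def crossMax {K : ℕ} (hK : 2 ≤ K) (k : Fin K)
    (f : Fin K → Fin 2 → ℝ) : ℝ :=
  (Finset.univ.filter (fun p : Fin K × Fin 2 => p.1 ≠ k)).sup'
    (by
      haveI : Nontrivial (Fin K) := Fin.nontrivial_iff_two_le.mpr hK
      obtain ⟨j, hj⟩ := exists_ne k
      exact ⟨(j, (0 : Fin 2)), by simp [hj]⟩)
    (fun p => f p.1 p.2)

/-- Minimum over all pairs `(l, j)` with `j ≠ k` of `f j l`. -/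
noncomputable def crossMin {K : ℕ} (hK : 2 ≤ K) (k : Fin K)
    (f : Fin K → Fin 2 → ℝ) : ℝ :=
  (Finset.univ.filter (fun p : Fin K × Fin 2 => p.1 ≠ k)).inf'
    (by
      haveI : Nontrivial (Fin K) := Fin.nontrivial_iff_two_le.mpr hK
      obtain ⟨j, hj⟩ := exists_ne k
      exact ⟨(j, (0 : Fin 2)), by simp [hj]⟩)
    (fun p => f p.1 p.2)

/-- Maximum over all cells `j ≠ i` of `f j`. -/
noncomputable def cellMax {K : ℕ} (hK : 2 ≤ K) (i : Fin K)
    (f : Fin K → ℝ) : ℝ :=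
  (Finset.univ.filter (fun j : Fin K => j ≠ i)).sup'
    (by
      haveI : Nontrivial (Fin K) := Fin.nontrivial_iff_two_le.mpr hK
      obtain ⟨j, hj⟩ := exists_ne i
      exact ⟨j, by simp [hj]⟩)
    f

/-- IBC TIN upper bound on the GDoF of the first-decoded user of cell `k`.
Users are indexed by `Fin 2` (user `0` is UE 1, user `1` is UE 2);
`π k 0` and `π k 1` are the first and second decoded users of cell `k`. -/
noncomputable def ibcBound1 {K : ℕ} (hK : 2 ≤ K) (α : Fin K → Fin K → Fin 2 → ℝ)
    (π : Fin K → Equiv.Perm (Fin 2)) (r : Fin K → Fin 2 → ℝ) (k : Fin K) : ℝ :=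
  max 0 (min
    (α k k (π k 0) + r k (π k 0) -
      pplus (max (α k k (π k 0) + r k (π k 1))
        (crossMax hK k (fun j l => α k j (π k 0) + r j l))))
    (α k k (π k 1) + r k (π k 0) -
      pplus (max (α k k (π k 1) + r k (π k 1))
        (crossMax hK k (fun j l => α k j (π k 1) + r j l)))))

/-- IBC TIN upper bound on the GDoF of the second-decoded user of cell `k`. -/
noncomputable def ibcBound2 {K : ℕ} (hK : 2 ≤ K) (α : Fin K → Fin K → Fin 2 → ℝ)
    (π : Fin K → Equiv.Perm (Fin 2)) (r : Fin K → Fin 2 → ℝ) (k : Fin K) : ℝ :=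
  max 0 (α k k (π k 1) + r k (π k 1) -
    pplus (crossMax hK k (fun j l => α k j (π k 1) + r j l)))

/-- The IBC TIN region `P^IBC_π(r)`. -/
noncomputable def IBCr {K : ℕ} (hK : 2 ≤ K) (α : Fin K → Fin K → Fin 2 → ℝ)
    (π : Fin K → Equiv.Perm (Fin 2)) (r : Fin K → Fin 2 → ℝ) :
    Set (Fin K → Fin 2 → ℝ) :=
  {d | ∀ k : Fin K,
    (0 ≤ d k (π k 0) ∧ d k (π k 0) ≤ ibcBound1 hK α π r k) ∧
    (0 ≤ d k (π k 1) ∧ d k (π k 1) ≤ ibcBound2 hK α π r k)}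

/-- The general TIN-achievable GDoF region of the IBC, `P^IBC⋆`. -/
noncomputable def IBCstar {K : ℕ} (hK : 2 ≤ K) (α : Fin K → Fin K → Fin 2 → ℝ) :
    Set (Fin K → Fin 2 → ℝ) :=
  {d | ∃ π : Fin K → Equiv.Perm (Fin 2), ∃ r : Fin K → Fin 2 → ℝ,
    (∀ k l, r k l ≤ 0) ∧ d ∈ IBCr hK α π r}

/-- IMAC TIN upper bound on the GDoF of user `π k 0` (decoded last) of cell `k`. -/
noncomputable def imacBound1 {K : ℕ} (hK : 2 ≤ K) (α : Fin K → Fin K → Fin 2 → ℝ)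
    (π : Fin K → Equiv.Perm (Fin 2)) (r : Fin K → Fin 2 → ℝ) (k : Fin K) : ℝ :=
  max 0 (α k k (π k 0) + r k (π k 0) -
    pplus (crossMax hK k (fun j l => α j k l + r j l)))

/-- IMAC TIN upper bound on the GDoF of user `π k 1` of cell `k`. -/
noncomputable def imacBound2 {K : ℕ} (hK : 2 ≤ K) (α : Fin K → Fin K → Fin 2 → ℝ)
    (π : Fin K → Equiv.Perm (Fin 2)) (r : Fin K → Fin 2 → ℝ) (k : Fin K) : ℝ :=
  max 0 (α k k (π k 1) + r k (π k 1) -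
    pplus (max (α k k (π k 0) + r k (π k 0))
      (crossMax hK k (fun j l => α j k l + r j l))))

/-- The IMAC TIN region `P^IMAC_π(r̄)`. -/
noncomputable def IMACr {K : ℕ} (hK : 2 ≤ K) (α : Fin K → Fin K → Fin 2 → ℝ)
    (π : Fin K → Equiv.Perm (Fin 2)) (r : Fin K → Fin 2 → ℝ) :
    Set (Fin K → Fin 2 → ℝ) :=
  {d | ∀ k : Fin K,
    (0 ≤ d k (π k 0) ∧ d k (π k 0) ≤ imacBound1 hK α π r k) ∧
    (0 ≤ d k (π k 1) ∧ d k (π k 1) ≤ imacBound2 hK α π r k)}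

/-- The general TIN-achievable GDoF region of the IMAC, `P^IMAC⋆`. -/
noncomputable def IMACstar {K : ℕ} (hK : 2 ≤ K) (α : Fin K → Fin K → Fin 2 → ℝ) :
    Set (Fin K → Fin 2 → ℝ) :=
  {d | ∃ π : Fin K → Equiv.Perm (Fin 2), ∃ r : Fin K → Fin 2 → ℝ,
    (∀ k l, r k l ≤ 0) ∧ d ∈ IMACr hK α π r}

/-- `betaD hK α π r k l = β_k^{[π_k(l+1)]}`, indexed by decoding position `l : Fin 2`. -/
noncomputable def betaD {K : ℕ} (hK : 2 ≤ K) (α : Fin K → Fin K → Fin 2 → ℝ)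
    (π : Fin K → Equiv.Perm (Fin 2)) (r : Fin K → Fin 2 → ℝ)
    (k : Fin K) (l : Fin 2) : ℝ :=
  if l = 0 then
    min
      (min (min (α k k (π k 0)) (-(r k (π k 1))))
        (α k k (π k 0) - crossMax hK k (fun j l' => α k j (π k 0) + r j l')))
      (min (min (α k k (π k 1)) (-(r k (π k 1))))
        (α k k (π k 1) - crossMax hK k (fun j l' => α k j (π k 1) + r j l')))
  else
    min (α k k (π k 1))
      (α k k (π k 1) - crossMax hK k (fun j l' => α k j (π k 1) + r j l'))

/-- The dual uplink power allocation `r̄_k^{[π_k(l)]} = −α_{kk}^{[π_k(l)]} + β_k^{[π_k(l)]}`,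
expressed as a function of the user index `u`. -/
noncomputable def rbarDual {K : ℕ} (hK : 2 ≤ K) (α : Fin K → Fin K → Fin 2 → ℝ)
    (π : Fin K → Equiv.Perm (Fin 2)) (r : Fin K → Fin 2 → ℝ)
    (k : Fin K) (u : Fin 2) : ℝ :=
  -α k k u + betaD hK α π r k ((π k).symm u)

/-- `gammaD hK α π r k l = γ_k^{[π_k(l+1)]}`, indexed by decoding position `l : Fin 2`. -/
noncomputable def gammaD {K : ℕ} (hK : 2 ≤ K) (α : Fin K → Fin K → Fin 2 → ℝ)
    (π : Fin K → Equiv.Perm (Fin 2)) (r : Fin K → Fin 2 → ℝ)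
    (k : Fin K) (l : Fin 2) : ℝ :=
  if l = 0 then
    max 0 (crossMax hK k (fun j l' => α j k l' + r j l'))
  else
    max (max 0 (α k k (π k 0) + r k (π k 0)))
      (crossMax hK k (fun j l' => α j k l' + r j l'))

/-- `γ_j^{[u]}` indexed by the user index `u`. -/
noncomputable def gammaU {K : ℕ} (hK : 2 ≤ K) (α : Fin K → Fin K → Fin 2 → ℝ)
    (π : Fin K → Equiv.Perm (Fin 2)) (r : Fin K → Fin 2 → ℝ)
    (j : Fin K) (u : Fin 2) : ℝ :=
  gammaD hK α π r j ((π j).symm u)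


private lemma le_crossMax' {K : ℕ} (hK : 2 ≤ K) (k : Fin K) (f : Fin K → Fin 2 → ℝ)
    {j : Fin K} (l : Fin 2) (h : j ≠ k) : f j l ≤ crossMax hK k f :=
  Finset.le_sup' (fun p : Fin K × Fin 2 => f p.1 p.2)
    (show ((j, l) : Fin K × Fin 2) ∈ _ by simp [h])

private lemma crossMax_le' {K : ℕ} (hK : 2 ≤ K) (k : Fin K) (f : Fin K → Fin 2 → ℝ)
    {b : ℝ} (h : ∀ j, j ≠ k → ∀ l, f j l ≤ b) : crossMax hK k f ≤ b :=
  Finset.sup'_le _ _ fun p hp => h p.1 (by simpa using (Finset.mem_filter.mp hp).2) p.2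

private lemma aux_le (a A g1 g1' g2 M : ℝ) (hg : g1' ≤ g1) (h2 : A ≤ g2)
    (hM : M ≤ a - A) (h0 : 0 ≤ a - A) :
    A - g1 ≤ a + -g1' - max (max (a + -g2) M) 0 := by
  have h := max_le (max_le (show a + -g2 ≤ a - A by linarith) hM) h0
  linarith

/-- **Uplink-to-downlink inclusion with explicit dual powers under power ordering.**
If the nonpositive allocation `r̄` satisfies
`α_{kk}^{[π_k(2)]} + r̄_k^{[π_k(2)]} ≥ α_{kk}^{[π_k(1)]} + r̄_k^{[π_k(1)]}` for all `k`,
then the downlink allocation `r_k^{[π_k(l)]} = −γ_k^{[π_k(l)]}` is nonpositive and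
`P^IMAC_π(r̄) ⊆ P^IBC_π(r)`. -/
theorem ul_to_dl_explicit {K : ℕ} (hK : 2 ≤ K) (α : Fin K → Fin K → Fin 2 → ℝ)
    (hα : ∀ k i l, 0 ≤ α k i l) (hord : ∀ k, α k k 0 ≤ α k k 1)
    (π : Fin K → Equiv.Perm (Fin 2)) (rb : Fin K → Fin 2 → ℝ)
    (hrb : ∀ k l, rb k l ≤ 0)
    (horder : ∀ k : Fin K,
      α k k (π k 0) + rb k (π k 0) ≤ α k k (π k 1) + rb k (π k 1)) :
    (∀ (k : Fin K) (l : Fin 2), -(gammaU hK α π rb k l) ≤ 0) ∧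
    IMACr hK α π rb ⊆ IBCr hK α π (fun k u => -(gammaU hK α π rb k u)) := by
  have hγ1le : ∀ (j : Fin K) (u : Fin 2),
      max 0 (crossMax hK j (fun i l' => α i j l' + rb i l')) ≤ gammaU hK α π rb j u := by
    intro j u
    unfold gammaU gammaD
    by_cases h : (π j).symm u = 0
    · simp [h]
    · simp only [h, if_false]
      exact max_le (le_trans (le_max_left _ _) (le_max_left _ _)) (le_max_right _ _)
  have hγnn : ∀ (j : Fin K) (u : Fin 2), 0 ≤ gammaU hK α π rb j u := fun j u =>
    le_trans (le_max_left 0 _) (hγ1le j u)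
  have hcross : ∀ (k j : Fin K) (u l' : Fin 2), j ≠ k →
      α k j l' + -(gammaU hK α π rb j u) ≤ -(rb k l') := by
    intro k j u l' hjk
    have h1 : α k j l' + rb k l' ≤ crossMax hK j (fun i l'' => α i j l'' + rb i l'') :=
      le_crossMax' hK j (fun i l'' => α i j l'' + rb i l'') l' (Ne.symm hjk)
    have h2 := hγ1le j u
    have h3 : crossMax hK j (fun i l'' => α i j l'' + rb i l'') ≤
        max 0 (crossMax hK j (fun i l'' => α i j l'' + rb i l'')) := le_max_right _ _
    linarith
  have hM : ∀ (k : Fin K) (u : Fin 2),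
      crossMax hK k (fun j l => α k j u + -(gammaU hK α π rb j l)) ≤ -(rb k u) :=
    fun k u => crossMax_le' hK k _ (fun j hj l => hcross k j l u hj)
  have hg0 : ∀ k : Fin K, gammaU hK α π rb k (π k 0)
      = max 0 (crossMax hK k fun i l' => α i k l' + rb i l') := by
    intro k; simp [gammaU, gammaD]
  have hg1 : ∀ k : Fin K, gammaU hK α π rb k (π k 1)
      = max (max 0 (α k k (π k 0) + rb k (π k 0)))
          (crossMax hK k fun i l' => α i k l' + rb i l') := by
    intro k; simp [gammaU, gammaD]
  refine ⟨fun k l => neg_nonpos.mpr (hγnn k l), ?_⟩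
  intro d hd k
  obtain ⟨⟨h01, h1⟩, h02, h2⟩ := hd k
  refine ⟨⟨h01, le_trans h1 ?_⟩, h02, le_trans h2 ?_⟩
  · simp only [imacBound1, ibcBound1, pplus]
    rw [hg0 k, hg1 k]
    refine max_le_max le_rfl (le_min ?_ ?_)
    · exact aux_le _ _ _ _ _ _ (le_of_eq (max_comm _ _))
        (le_trans (le_max_right 0 _) (le_max_left _ _))
        (by linarith [hM k (π k 0)]) (by linarith [hrb k (π k 0)])
    · exact aux_le _ _ _ _ _ _ (le_of_eq (max_comm _ _))
        (le_trans (le_max_right 0 _) (le_max_left _ _))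
        (by linarith [hM k (π k 1), horder k]) (by linarith [hrb k (π k 1), horder k])
  · simp only [imacBound2, ibcBound2, pplus]
    rw [hg1 k]
    refine max_le_max le_rfl ?_
    have heq : max (max (α k k (π k 0) + rb k (π k 0))
          (crossMax hK k fun i l' => α i k l' + rb i l')) 0
        = max (max 0 (α k k (π k 0) + rb k (π k 0)))
          (crossMax hK k fun i l' => α i k l' + rb i l') := by
      rw [max_comm _ (0 : ℝ), ← max_assoc]
    have hZ : max (crossMax hK k (fun j l => α k j (π k 1) + -(gammaU hK α π rb j l))) 0
        ≤ α k k (π k 1) - (α k k (π k 1) + rb k (π k 1)) :=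
      max_le (by linarith [hM k (π k 1)]) (by linarith [hrb k (π k 1)])
    linarith [heq, hZ]
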